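/- Let n ≥ 2 and let K be the Cauchy–Szegő kernel on the quaternionic Heisenberg group 𝓗^{n−1}. Then there exist a point g₀ ∈ 𝓗^{n−1} with ‖g₀‖ = 1 and a constant C₀ > 0 such that for every R > 0 and every g ∈ 𝓗^{n−1}, the point g_* = g·δ_R(g₀^{−1}) satisfies ρ(g,g_*) = R and |K(g_*^{−1}·g)| = C₀·R^{−Q}, where Q = 4n+2. -/

import Mathlib

open Quaternion
noncomputable section

/-- An element of the quaternionic Heisenberg group `𝓗^m = Im ℍ × ℍ^m`,
modelled as a pair `(t, y)` with `t : ℍ` (required to be purely imaginary via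
the hypothesis `t.re = 0` in the theorems below) and `y : Fin m → ℍ`. -/
abbrev QH (m : ℕ) := ℍ[ℝ] × (Fin m → ℍ[ℝ])

/-- The group product `(t,y)·(t',y') = (t + t' + 2 Im⟨y,y'⟩, y + y')`, where
`⟨y,y'⟩ = Σ_l conj(y_l)·y'_l`. -/
def qmul {m : ℕ} (g h : QH m) : QH m :=
  (g.1 + h.1 + 2 * (∑ l, star (g.2 l) * h.2 l).im, g.2 + h.2)

/-- The group inverse `(t,y)⁻¹ = (−t,−y)`. -/
def qinv {m : ℕ} (g : QH m) : QH m := (-g.1, -g.2)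

/-- The homogeneous norm `‖(t,y)‖ = (|y|⁴ + |t|²)^{1/4}`. -/
def hnorm {m : ℕ} (g : QH m) : ℝ :=
  ((∑ l, ‖g.2 l‖ ^ 2) ^ 2 + ‖g.1‖ ^ 2) ^ ((1 : ℝ) / 4)

/-- The quasi-distance `ρ(h,g) = ‖g⁻¹·h‖`. -/
def qdist {m : ℕ} (h g : QH m) : ℝ := hnorm (qmul (qinv g) h)

/-- The dilation `δ_r(t,y) = (r²t, ry)`. -/
def qdil {m : ℕ} (r : ℝ) (g : QH m) : QH m := ((r ^ 2 : ℝ) • g.1, r • g.2)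

/-- The normalized Cauchy–Szegő kernel density: `s(σ)` is the `(2n−2)`-nd
derivative at `x = Re σ` of `x ↦ conj(x + Im σ)·(x² + |Im σ|²)^{−2}`
(i.e. `∂^{2(n−1)}/∂x₁^{2(n−1)}[conj σ/|σ|⁴]` with `c_{n−1} = 1`). -/
def sker (n : ℕ) (σ : ℍ[ℝ]) : ℍ[ℝ] :=
  iteratedDeriv (2 * n - 2)
    (fun x : ℝ => ((x ^ 2 + ‖σ.im‖ ^ 2) ^ 2)⁻¹ • star ((x : ℍ[ℝ]) + σ.im)) σ.re

/-- The Cauchy–Szegő kernel `K(t,y) = s(|y|² + t)` on `𝓗^m`. -/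
def Kker (n : ℕ) {m : ℕ} (g : QH m) : ℍ[ℝ] :=
  sker n (((∑ l, ‖g.2 l‖ ^ 2 : ℝ) : ℍ[ℝ]) + g.1)

/-!
Take `g₀ = (0, e₁)`. Since `qmul` is a group law, `g_*⁻¹ · g = (g · δ_R g₀⁻¹)⁻¹ · g = δ_R g₀`,
so `ρ(g, g_*) = ‖δ_R g₀‖ = R` by homogeneity of the norm, and `K(δ_R g₀) = s(R²)`. On the real
axis the density is `s(x) = (d/dx)^{2n-2} x⁻³ = (∏_{i < 2n-2} (-3 - i)) x^{-2n-1}`, whose modulus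
at `x = R²` is `C₀ R^{-Q}`.
-/

open Finset

lemma sker_ofReal (n : ℕ) {x : ℝ} (hx : x ≠ 0) :
    sker n x = ((∏ i ∈ range (2 * n - 2), (-3 - i : ℝ)) * x ^ ((-3 : ℤ) - (2 * n - 2 : ℕ)) : ℝ) := by
  have hfun : (fun y : ℝ => ((y ^ 2 + ‖(x : ℍ[ℝ]).im‖ ^ 2) ^ 2)⁻¹ • star ((y : ℍ[ℝ]) + (x : ℍ[ℝ]).im))
      = fun y => y ^ (-3 : ℤ) • (1 : ℍ[ℝ]) := by
    funext y
    rw [Quaternion.im_coe, norm_zero, add_zero, star_coe, ← Quaternion.coe_one, Quaternion.smul_coe,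
      Quaternion.smul_coe]
    congr 1
    rcases eq_or_ne y 0 with rfl | hy
    · simp
    · field_simp
      ring
  have hsmooth : ContDiffAt ℝ (2 * n - 2 : ℕ) (fun y : ℝ => y ^ (-3 : ℤ)) x := by
    simp only [zpow_neg, zpow_ofNat]
    fun_prop (disch := positivity)
  rw [sker, hfun, Quaternion.re_coe, iteratedDeriv_smul_const hsmooth, iteratedDeriv_eq_iterate,
    iter_deriv_zpow, ← Quaternion.coe_one, Quaternion.smul_coe, mul_one]
  push_cast
  rfl

lemma norm_sker_sq {n : ℕ} (hn : 1 ≤ n) {R : ℝ} (hR : 0 < R) :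
    ‖sker n ((R ^ 2 : ℝ) : ℍ[ℝ])‖
      = |∏ i ∈ range (2 * n - 2), (-3 - i : ℝ)| * R ^ (-(4 * (n : ℝ) + 2)) := by
  rw [sker_ofReal n (by positivity), Quaternion.norm_coe, Real.norm_eq_abs, abs_mul,
    abs_of_pos (zpow_pos (pow_pos hR 2) _), ← Real.rpow_intCast, ← Real.rpow_natCast R 2,
    ← Real.rpow_mul hR.le]
  congr 2
  push_cast [Nat.cast_sub (by omega : 2 ≤ 2 * n)]
  ring

section

variable {m : ℕ}

lemma im_sum_star_mul_comm (y z : Fin m → ℍ[ℝ]) :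
    (∑ l, star (z l) * y l).im = -(∑ l, star (y l) * z l).im := by
  rw [← Quaternion.im_star, star_sum]
  simp only [star_mul, star_star]

lemma im_sum_star_mul_self (y : Fin m → ℍ[ℝ]) : (∑ l, star (y l) * y l).im = 0 :=
  have := IsAddTorsionFree.of_module_rat ℍ[ℝ]
  self_eq_neg.mp (im_sum_star_mul_comm y y)

lemma qmul_qinv_qmul_self (g h : QH m) : qmul (qinv (qmul g h)) g = qinv h := by
  have hsum : ∑ l, star ((-(g.2 + h.2)) l) * g.2 l
      = -(∑ l, star (g.2 l) * g.2 l) - ∑ l, star (h.2 l) * g.2 l := by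
    simp only [Pi.neg_apply, Pi.add_apply, star_neg, star_add, neg_mul, add_mul, neg_add,
      sum_add_distrib, sum_neg_distrib, sub_eq_add_neg]
  simp only [qmul, qinv, Prod.mk.injEq]
  rw [hsum, Quaternion.im_sub, Quaternion.im_neg, im_sum_star_mul_self,
    im_sum_star_mul_comm g.2 h.2]
  constructor
  · noncomm_ring
  · abel

lemma qinv_qinv (g : QH m) : qinv (qinv g) = g := by
  simp [qinv]

lemma qinv_qdil (r : ℝ) (g : QH m) : qinv (qdil r g) = qdil r (qinv g) := by
  simp [qinv, qdil]

lemma hnorm_qdil {r : ℝ} (hr : 0 ≤ r) (g : QH m) : hnorm (qdil r g) = r * hnorm g := by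
  unfold hnorm qdil
  set Y := ∑ l, ‖g.2 l‖ ^ 2
  have hy : ∑ l, ‖(r • g.2) l‖ ^ 2 = r ^ 2 * Y := by
    simp only [Y, Pi.smul_apply, norm_smul, mul_pow, Real.norm_eq_abs, sq_abs, mul_sum]
  have ht : ‖(r ^ 2) • g.1‖ ^ 2 = r ^ 4 * ‖g.1‖ ^ 2 := by
    rw [norm_smul, Real.norm_eq_abs, abs_of_nonneg (by positivity)]
    ring
  have hsum : (r ^ 2 * Y) ^ 2 + r ^ 4 * ‖g.1‖ ^ 2 = r ^ 4 * (Y ^ 2 + ‖g.1‖ ^ 2) := by ring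
  have h4 : (r ^ 4) ^ ((1 : ℝ) / 4) = r := by
    rw [one_div]
    exact Real.pow_rpow_inv_natCast hr (by norm_num)
  rw [hy, ht, hsum, Real.mul_rpow (pow_nonneg hr 4) (add_nonneg (sq_nonneg _) (sq_nonneg _)), h4]

lemma sum_norm_sq_single (i : Fin m) (a : ℍ[ℝ]) :
    ∑ l, ‖(Pi.single i a : Fin m → ℍ[ℝ]) l‖ ^ 2 = ‖a‖ ^ 2 := by
  rw [Fintype.sum_eq_single i fun l hl => by simp [hl], Pi.single_eq_same]

lemma hnorm_zero_single (i : Fin m) : hnorm ((0, Pi.single i 1) : QH m) = 1 := by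
  simp [hnorm, sum_norm_sq_single]

lemma Kker_qdil_zero_single (n : ℕ) (r : ℝ) (i : Fin m) :
    Kker n (qdil r ((0, Pi.single i 1) : QH m)) = sker n ((r ^ 2 : ℝ) : ℍ[ℝ]) := by
  simp [qdil, Kker, ← Pi.single_smul', sum_norm_sq_single, norm_smul]

end

/-- Step 2 of the lower-bound theorem: there exist a point `g₀` on the unit
sphere of `𝓗^{n−1}` and a constant `C₀ > 0` such that for every `R > 0` and
every `g`, the point `g_* = g·δ_R(g₀⁻¹)` satisfies `ρ(g,g_*) = R` and
`|K(g_*⁻¹·g)| = C₀·R^{−Q}`, with `Q = 4n+2`. -/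
theorem Kker_pointwise_value (n : ℕ) (hn : 2 ≤ n) :
    ∃ g₀ : QH (n - 1), g₀.1.re = 0 ∧ hnorm g₀ = 1 ∧
      ∃ C₀ : ℝ, 0 < C₀ ∧
        ∀ R : ℝ, 0 < R → ∀ g : QH (n - 1), g.1.re = 0 →
          qdist g (qmul g (qdil R (qinv g₀))) = R ∧
          ‖Kker n (qmul (qinv (qmul g (qdil R (qinv g₀)))) g)‖
            = C₀ * R ^ (-((4 * (n : ℝ) + 2))) := by
  set g₀ : QH (n - 1) := (0, Pi.single ⟨0, by omega⟩ 1)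
  refine ⟨g₀, Quaternion.re_zero, hnorm_zero_single _, |∏ i ∈ range (2 * n - 2), (-3 - i : ℝ)|,
    abs_pos.2 (prod_ne_zero_iff.2 fun i _ => by linarith [(i.cast_nonneg : (0 : ℝ) ≤ i)]), ?_⟩
  intro R hR g _
  have hg : qmul (qinv (qmul g (qdil R (qinv g₀)))) g = qdil R g₀ := by
    rw [qmul_qinv_qmul_self, qinv_qdil, qinv_qinv]
  refine ⟨by rw [qdist, hg, hnorm_qdil hR.le, hnorm_zero_single, mul_one], ?_⟩
  rw [hg, Kker_qdil_zero_single, norm_sker_sq (by omega) hR]
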